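/- Let C be a stack of n ≥ 2 burnt pancakes containing a pair of pancakes in consecutive positions that are adjacent, and let C' be the stack of n−1 burnt pancakes obtained from C by contracting these two adjacent pancakes into a single pancake (equivalently, by removing one of the two and renumbering). Then the minimum numbers of flips needed to sort C and C' are equal: g(C) = g(C'). -/

import Mathlib

/-- A stack of burnt pancakes, listed from top to bottom.  Each pancake is a pair
`(size, b)` where `b = true` means the pancake lies burnt-side up
and `b = false` means burnt-side down. -/
abbrev BStack := List (ℕ × Bool)

/-- An `i`-flip: the top `i` pancakes are reversed and their orientations switched. -/
def bflip (i : ℕ) (C : BStack) : BStack :=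
  ((C.take i).reverse.map fun p => (p.1, !p.2)) ++ C.drop i

/-- The sorted stack `I n`: pancakes `1,…,n` from top to bottom, all burnt-side down. -/
def Istk (n : ℕ) : BStack := (List.range n).map fun k => (k + 1, false)

/-- The stack `-I n`: pancakes `1,…,n` from top to bottom, all burnt-side up. -/
def negIstk (n : ℕ) : BStack := (List.range n).map fun k => (k + 1, true)

/-- `C` is a stack of `n` burnt pancakes: its sizes form a permutation of `{1,…,n}`. -/
def IsBStack (n : ℕ) (C : BStack) : Prop :=
  (C.map Prod.fst).Perm ((List.range n).map (· + 1))

/-- `g C`: the minimum number of flips transforming `C` into the sorted stack `I n`. -/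
noncomputable def gB (C : BStack) : ℕ :=
  sInf { m | ∃ s : List ℕ, (∀ i ∈ s, 1 ≤ i ∧ i ≤ C.length) ∧ s.length = m ∧
      s.foldl (fun D i => bflip i D) C = Istk C.length }

/-- `-C`: switch the orientation of every pancake, keeping the order of pancakes. -/
def negStk (C : BStack) : BStack := C.map fun p => (p.1, !p.2)

/-- Two burnt pancakes on consecutive positions (`p` directly above `q`) are adjacent iff
they form a substack of `I n` (both burnt-side down, sizes increasing by one downwards)
or of its full reversal (both burnt-side up, sizes decreasing by one downwards). -/
def adjPair (p q : ℕ × Bool) : Bool :=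
  (!p.2 && !q.2 && (q.1 == p.1 + 1)) || (p.2 && q.2 && (p.1 == q.1 + 1))

/-- The list of adjacency indicators between consecutive positions of `C`. -/
def adjSeq (C : BStack) : List Bool := (C.zip C.tail).map fun pq => adjPair pq.1 pq.2

/-- `a C`: the number of adjacencies of `C`. -/
def aB (C : BStack) : ℕ := (adjSeq C).count true

/-- `b C`: the number of deep blocks of `C`.  A block is a maximal run of pairwise
adjacent consecutive pancakes (at least two pancakes); it is deep iff it does not contain
the topmost pancake, i.e. iff its run of adjacencies starts just after a non-adjacency. -/
def bB (C : BStack) : ℕ :=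
  (((adjSeq C).zip (adjSeq C).tail).filter fun pq => !pq.1 && pq.2).length

/-- Renumber the sizes of the pancakes of `C` order-preservingly to `{1,…,C.length}`:
each pancake receives as new size the number of pancakes of `C` with strictly smaller
size, plus one.  Orientations are kept. -/
def renumber (C : BStack) : BStack :=
  C.map fun p => (((C.map Prod.fst).filter fun s => decide (s < p.1)).length + 1, p.2)

/-!
Let the adjacent pair have sizes `s, s + 1`. Splitting pancake `s` of `C'` into that pair (with
the orientation it carries) gives back `C`, and deleting pancake `s` undoes the splitting. Both
substitutions commute with flips: substituting after an `i`-flip is the same as flipping the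
substituted stack at the length of the image of the top `i` pancakes. Both send sorted stacks to
sorted stacks, so each turns a sorting sequence of one stack into one of the other that is no
longer, and `g(C) = g(C')`.
-/

theorem Nat.sInf_eq_of_forall_exists_le {A B : Set ℕ}
    (hAB : ∀ a ∈ A, ∃ b ∈ B, b ≤ a) (hBA : ∀ b ∈ B, ∃ a ∈ A, a ≤ b) : sInf A = sInf B := by
  rcases A.eq_empty_or_nonempty with rfl | hA
  · rcases B.eq_empty_or_nonempty with rfl | ⟨b, hb⟩
    · rfl
    · obtain ⟨a, ha, -⟩ := hBA b hb
      exact ha.elim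
  obtain ⟨b₀, hb₀, -⟩ := hAB _ (Nat.sInf_mem hA)
  have hB : B.Nonempty := ⟨b₀, hb₀⟩
  apply le_antisymm
  · obtain ⟨a, ha, hle⟩ := hBA _ (Nat.sInf_mem hB)
    exact (Nat.sInf_le ha).trans hle
  · obtain ⟨b, hb, hle⟩ := hAB _ (Nat.sInf_mem hA)
    exact (Nat.sInf_le hb).trans hle

namespace BurntPancake

/-- Substituting `f x` for every pancake `x` of a stack then commutes with flips. -/
def FlipCompatible (f : ℕ × Bool → BStack) : Prop :=
  ∀ x : ℕ × Bool, f (x.1, !x.2) = negStk (f x).reverse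

variable {f g : ℕ × Bool → BStack}

theorem bflip_eq (i : ℕ) (C : BStack) : bflip i C = negStk (C.take i).reverse ++ C.drop i := rfl

theorem length_bflip (i : ℕ) (C : BStack) : (bflip i C).length = C.length := by
  simp only [bflip, List.length_append, List.length_reverse, List.length_map, List.length_take,
    List.length_drop]
  omega

theorem flatMap_negStk_reverse (hf : FlipCompatible f) (l : BStack) :
    (negStk l.reverse).flatMap f = negStk (l.flatMap f).reverse := by
  induction l with
  | nil => rfl
  | cons x l ih =>
    have hx := hf x
    simp only [negStk, List.map_reverse] at ih hx ⊢
    simp [ih, hx]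

theorem flatMap_bflip (hf : FlipCompatible f) (i : ℕ) (D : BStack) :
    (bflip i D).flatMap f = bflip ((D.take i).flatMap f).length (D.flatMap f) := by
  have hD : D.flatMap f = (D.take i).flatMap f ++ (D.drop i).flatMap f := by
    rw [← List.flatMap_append, D.take_append_drop]
  rw [bflip_eq, bflip_eq, List.flatMap_append, flatMap_negStk_reverse hf, hD, List.take_left,
    List.drop_left]

theorem length_flatMap_take_le (i : ℕ) (D : BStack) :
    ((D.take i).flatMap f).length ≤ (D.flatMap f).length := by
  conv_rhs => rw [← D.take_append_drop i, List.flatMap_append, List.length_append]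
  omega

/-- Flips of an empty prefix of `D.flatMap f` are dropped, which is why the new sequence may be
shorter. -/
theorem exists_flips_flatMap (hf : FlipCompatible f) (s : List ℕ) (D : BStack) :
    ∃ s' : List ℕ, s'.length ≤ s.length ∧ (∀ i ∈ s', 1 ≤ i ∧ i ≤ (D.flatMap f).length) ∧
      s'.foldl (fun E i => bflip i E) (D.flatMap f) =
        (s.foldl (fun E i => bflip i E) D).flatMap f := by
  induction s generalizing D with
  | nil => exact ⟨[], by simp, by simp, rfl⟩
  | cons i s ih =>
    obtain ⟨s', hlen, hrange, hfold⟩ := ih (bflip i D)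
    have hstep := flatMap_bflip hf i D
    have hlength : ((bflip i D).flatMap f).length = (D.flatMap f).length := by
      rw [hstep, length_bflip]
    set k := ((D.take i).flatMap f).length
    rcases Nat.eq_zero_or_pos k with hk | hk
    · refine ⟨s', by simp only [List.length_cons]; omega, fun a ha => hlength ▸ hrange a ha, ?_⟩
      rwa [hstep, hk, bflip, List.take_zero, List.drop_zero, List.reverse_nil, List.map_nil,
        List.nil_append] at hfold
    · refine ⟨k :: s', by simpa using hlen, ?_, by rw [List.foldl_cons, ← hstep]; exact hfold⟩
      intro a ha
      rcases List.mem_cons.mp ha with rfl | ha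
      · exact ⟨hk, length_flatMap_take_le i D⟩
      · exact hlength ▸ hrange a ha

def sortLengths (C : BStack) : Set ℕ :=
  { m | ∃ s : List ℕ, (∀ i ∈ s, 1 ≤ i ∧ i ≤ C.length) ∧ s.length = m ∧
      s.foldl (fun D i => bflip i D) C = Istk C.length }

theorem exists_mem_sortLengths_flatMap_le (hf : FlipCompatible f) {D : BStack}
    (hI : (Istk D.length).flatMap f = Istk (D.flatMap f).length) :
    ∀ m ∈ sortLengths D, ∃ m' ∈ sortLengths (D.flatMap f), m' ≤ m := by
  rintro _ ⟨s, -, rfl, hsort⟩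
  obtain ⟨s', hlen, hrange, hfold⟩ := exists_flips_flatMap hf s D
  exact ⟨s'.length, ⟨s', hrange, rfl, by rw [hfold, hsort, hI]⟩, hlen⟩

theorem gB_flatMap (hf : FlipCompatible f) (hg : FlipCompatible g)
    (hgf : ∀ x, (f x).flatMap g = [x]) {D : BStack}
    (hI : (Istk D.length).flatMap f = Istk (D.flatMap f).length) :
    gB (D.flatMap f) = gB D := by
  have hleft : ∀ l : BStack, (l.flatMap f).flatMap g = l := by
    intro l
    simp [List.flatMap_assoc, hgf]
  have hI' : (Istk (D.flatMap f).length).flatMap g = Istk ((D.flatMap f).flatMap g).length := by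
    rw [← hI, hleft, hleft]
  have hback := exists_mem_sortLengths_flatMap_le hg hI'
  rw [hleft] at hback
  exact Nat.sInf_eq_of_forall_exists_le hback (exists_mem_sortLengths_flatMap_le hf hI)

def expandAt (s : ℕ) : ℕ × Bool → BStack
  | (u, b) =>
    if u = s then (if b then [(s + 1, true), (s, true)] else [(s, false), (s + 1, false)])
    else if u < s then [(u, b)] else [(u + 1, b)]

def contractAt (s : ℕ) : ℕ × Bool → BStack
  | (u, b) => if u < s then [(u, b)] else if u = s then [] else [(u - 1, b)]

theorem flipCompatible_expandAt (s : ℕ) : FlipCompatible (expandAt s) := by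
  rintro ⟨u, b⟩
  cases b <;> simp only [expandAt, negStk, Bool.not_false, Bool.not_true] <;> split_ifs <;>
    simp_all

theorem flipCompatible_contractAt (s : ℕ) : FlipCompatible (contractAt s) := by
  rintro ⟨u, b⟩
  simp only [contractAt, negStk]
  split_ifs <;> simp

theorem flatMap_contractAt_expandAt (s : ℕ) (x : ℕ × Bool) :
    (expandAt s x).flatMap (contractAt s) = [x] := by
  obtain ⟨u, b⟩ := x
  rcases lt_trichotomy u s with h | rfl | h
  · simp [expandAt, contractAt, h, h.ne]
  · cases b <;> simp [expandAt, contractAt]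
  · have hu : ¬u + 1 < s ∧ u + 1 ≠ s := by omega
    simp [expandAt, contractAt, h.ne', h.not_gt, hu]

theorem flatMap_expandAt_Istk {s : ℕ} (hs : 1 ≤ s) (m : ℕ) :
    (Istk m).flatMap (expandAt s) = Istk (if m < s then m else m + 1) := by
  induction m with
  | zero => rw [if_pos (Nat.lt_of_succ_le hs)]; rfl
  | succ m ih =>
    have hsucc : ∀ k, Istk (k + 1) = Istk k ++ [(k + 1, false)] := by
      simp [Istk, List.range_succ]
    rw [hsucc, List.flatMap_append, ih]
    rcases lt_trichotomy (m + 1) s with h | rfl | h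
    · rw [if_pos (by omega), if_pos h, hsucc]
      simp [expandAt, h, h.ne]
    · rw [if_pos (by omega), if_neg (by omega), hsucc, hsucc]
      simp [expandAt]
    · rw [if_neg (by omega), if_neg (by omega), hsucc (m + 1)]
      simp [expandAt, h.ne', h.not_gt]

def closeGap (t : ℕ) (x : ℕ × Bool) : ℕ × Bool := (if t < x.1 then x.1 - 1 else x.1, x.2)

theorem countP_lt_map_succ_range (w n : ℕ) :
    ((List.range n).map (· + 1)).countP (fun k => decide (k < w)) = min (w - 1) n := by
  induction n with
  | zero => simp
  | succ n ih =>
    rw [List.range_succ, List.map_append, List.countP_append, ih]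
    by_cases h : n + 1 < w <;> simp [h] <;> omega

theorem nodup_map_succ_range (n : ℕ) : ((List.range n).map (· + 1)).Nodup :=
  List.nodup_range.map fun _ _ => Nat.succ.inj

theorem renumber_eq_map_closeGap {D : BStack} {t n : ℕ}
    (h : (t :: D.map Prod.fst).Perm ((List.range n).map (· + 1))) :
    renumber D = D.map (closeGap t) := by
  have hnodup : (t :: D.map Prod.fst).Nodup :=
    h.nodup_iff.mpr (nodup_map_succ_range n)
  refine List.map_congr_left fun x hx => ?_
  have hxt : x.1 ≠ t := fun hxt =>
    (List.nodup_cons.mp hnodup).1 (hxt ▸ List.mem_map_of_mem hx)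
  have hxn : 1 ≤ x.1 ∧ x.1 ≤ n := by
    have hmem := h.subset (List.mem_cons_of_mem t (List.mem_map_of_mem (f := Prod.fst) hx))
    simp only [List.mem_map, List.mem_range] at hmem
    omega
  have hcount := h.countP_eq fun k => decide (k < x.1)
  rw [List.countP_cons, countP_lt_map_succ_range] at hcount
  rw [← List.countP_eq_length_filter, closeGap, Prod.mk.injEq]
  refine ⟨?_, rfl⟩
  by_cases htx : t < x.1 <;> simp only [htx, decide_true, decide_false, if_true, if_false,
    Bool.false_eq_true] at hcount ⊢ <;> omega

theorem adjPair_eq_true_iff {p q : ℕ × Bool} :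
    adjPair p q = true ↔
      ∃ s, (p = (s, false) ∧ q = (s + 1, false)) ∨ (p = (s + 1, true) ∧ q = (s, true)) := by
  obtain ⟨u, a⟩ := p
  obtain ⟨v, b⟩ := q
  cases a <;> cases b <;> simp [adjPair]

theorem expandAt_closeGap {s t : ℕ} (ht : t = s ∨ t = s + 1) {x : ℕ × Bool} (hs : x.1 ≠ s)
    (hs' : x.1 ≠ s + 1) : expandAt s (closeGap t x) = [x] := by
  obtain ⟨u, b⟩ := x
  rcases ht with rfl | rfl <;> simp only [closeGap, expandAt] at hs hs' ⊢ <;> split_ifs <;>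
    simp_all <;> omega

theorem gB_append_adjacent {n : ℕ} {A B : BStack} {p q : ℕ × Bool}
    (hC : IsBStack n (A ++ p :: q :: B)) (hadj : adjPair p q = true) :
    gB (A ++ p :: q :: B) = gB (renumber (A ++ q :: B)) := by
  obtain ⟨s, hpq⟩ := adjPair_eq_true_iff.mp hadj
  have hsizes : (p.1 = s ∧ q.1 = s + 1) ∨ (p.1 = s + 1 ∧ q.1 = s) := by
    rcases hpq with ⟨rfl, rfl⟩ | ⟨rfl, rfl⟩ <;> simp
  have hsorted : ((A ++ p :: q :: B).map Prod.fst).Perm ((List.range n).map (· + 1)) := hC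
  have hperm : (p.1 :: q.1 :: (A ++ B).map Prod.fst).Perm ((List.range n).map (· + 1)) :=
    List.Perm.trans (by simpa using (List.perm_middle.trans (List.perm_middle.cons _)).symm) hsorted
  have hnodup := hperm.nodup_iff.mpr (nodup_map_succ_range n)
  have hbounds : 1 ≤ s ∧ s + 1 ≤ n := by
    have hp := hperm.subset (List.mem_cons_self ..)
    have hq := hperm.subset (List.mem_cons_of_mem _ (List.mem_cons_self ..))
    simp only [List.mem_map, List.mem_range] at hp hq
    omega
  have hrenum : renumber (A ++ q :: B) = (A ++ q :: B).map (closeGap p.1) :=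
    renumber_eq_map_closeGap (List.Perm.trans (by simpa using List.perm_middle.symm) hsorted)
  have hfixed : ∀ x ∈ A ++ B, expandAt s (closeGap p.1 x) = [x] := by
    intro x hx
    have hxfst : x.1 ∈ (A ++ B).map Prod.fst := List.mem_map_of_mem hx
    have hxp : x.1 ≠ p.1 := fun h =>
      (List.nodup_cons.mp hnodup).1 (List.mem_cons_of_mem _ (h ▸ hxfst))
    have hxq : x.1 ≠ q.1 := fun h =>
      (List.nodup_cons.mp (List.nodup_cons.mp hnodup).2).1 (h ▸ hxfst)
    exact expandAt_closeGap (by omega) (by omega) (by omega)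
  have hq : expandAt s (closeGap p.1 q) = [p, q] := by
    rcases hpq with ⟨rfl, rfl⟩ | ⟨rfl, rfl⟩ <;> simp [closeGap, expandAt]
  have hexpand : (renumber (A ++ q :: B)).flatMap (expandAt s) = A ++ p :: q :: B := by
    have hA : A.flatMap (fun x => expandAt s (closeGap p.1 x)) = A := by
      rw [List.flatMap_congr fun x hx => hfixed x (List.mem_append_left B hx),
        List.flatMap_singleton']
    have hB : B.flatMap (fun x => expandAt s (closeGap p.1 x)) = B := by
      rw [List.flatMap_congr fun x hx => hfixed x (List.mem_append_right A hx),
        List.flatMap_singleton']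
    rw [hrenum, List.flatMap_map, List.flatMap_append, List.flatMap_cons, hA, hB, hq]
    rfl
  have hlen : (A ++ p :: q :: B).length = n := by simpa using hC.length_eq
  have hlen' : (renumber (A ++ q :: B)).length = n - 1 := by
    simp only [renumber, List.length_map, List.length_append, List.length_cons] at hlen ⊢
    omega
  rw [← hexpand]
  refine gB_flatMap (flipCompatible_expandAt s) (flipCompatible_contractAt s)
    (flatMap_contractAt_expandAt s) ?_
  rw [hexpand, hlen, hlen', flatMap_expandAt_Istk hbounds.1, if_neg (by omega),
    Nat.sub_add_cancel (by omega)]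

end BurntPancake

theorem List.exists_eq_append_cons_cons_of_getElem? {α : Type*} {l : List α} {j : ℕ} {a b : α}
    (ha : l[j]? = some a) (hb : l[j + 1]? = some b) :
    ∃ A B, l = A ++ a :: b :: B ∧ l.eraseIdx j = A ++ b :: B := by
  obtain ⟨hj, rfl⟩ := List.getElem?_eq_some_iff.mp ha
  obtain ⟨hj', rfl⟩ := List.getElem?_eq_some_iff.mp hb
  have hdrop : l.drop (j + 1) = l[j + 1] :: l.drop (j + 2) := List.drop_eq_getElem_cons hj'
  refine ⟨l.take j, l.drop (j + 2), ?_, by rw [List.eraseIdx_eq_take_drop_succ, hdrop]⟩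
  rw [← hdrop, ← List.drop_eq_getElem_cons hj, List.take_append_drop]

theorem gB_contract_adjacent_general (n : ℕ) (C : BStack) (hC : IsBStack n C)
    (j : ℕ) (p q : ℕ × Bool) (hp : C[j]? = some p) (hq : C[j + 1]? = some q)
    (hadj : adjPair p q = true) :
    gB C = gB (renumber (C.eraseIdx j)) := by
  obtain ⟨A, B, rfl, hErase⟩ := List.exists_eq_append_cons_cons_of_getElem? hp hq
  rw [hErase]
  exact BurntPancake.gB_append_adjacent hC hadj

/-- Let `C` be a stack of `n ≥ 2` burnt pancakes containing a pair of
pancakes in consecutive positions `j, j+1` that are adjacent, and let `C'` be the stack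
of `n−1` burnt pancakes obtained from `C` by contracting these two adjacent pancakes
into a single pancake (equivalently, by removing one of the two and renumbering).
Then `g(C) = g(C')`. -/
theorem gB_contract_adjacent (n : ℕ) (hn : 2 ≤ n) (C : BStack) (hC : IsBStack n C)
    (j : ℕ) (p q : ℕ × Bool) (hp : C[j]? = some p) (hq : C[j + 1]? = some q)
    (hadj : adjPair p q = true) :
    gB C = gB (renumber (C.eraseIdx j)) :=
  gB_contract_adjacent_general n C hC j p q hp hq hadj
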